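/- (Utility of perturb-and-alternately-project, conditional form) Let S₁, …, S_q ⊆ ℝⁿ be nonempty compact convex sets with nonempty intersection S = ⋂_{ℓ∈[q]} S_ℓ contained in the ball {X ∈ ℝⁿ : ‖X‖² ≤ n^C} for some C ≥ 0. Suppose c ∈ (0,1) is such that for every x ∈ ℝⁿ the averaged alternating-projection iterates, defined by Π⁰(x) = x and Π^t(x) = (1/q)·∑_{ℓ∈[q]} Π_{S_ℓ}(Π^{t−1}(x)), satisfy ‖Π_S(x) − Π^t(x)‖ ≤ c^t·‖Π_S(x) − x‖ for all t ≥ 1. Let ε, δ ∈ (0,1], Δ > 0, let W ∼ N(0, σ²·Id_n) with σ² = 2·log(2/δ)·Δ²/ε², and let t ≥ 1 be such that 2·c^{2t}·(4σ²n + 2n^C) ≤ n^{−10}. Then for every A ∈ ℝⁿ, E ‖Π^t(A + W) − Π_S(A)‖² ≤ (16·√(log(2/δ))/(3ε))·Δ·G(S) + 8·c^{2t}·‖A‖² + n^{−10}. -/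

import Mathlib

open MeasureTheory ProbabilityTheory

/-- The standard Gaussian measure `N(0, Id_n)` on `ℝⁿ = EuclideanSpace ℝ (Fin n)`. -/
noncomputable def stdGaussianE (n : ℕ) : Measure (EuclideanSpace ℝ (Fin n)) :=
  (Measure.pi fun _ : Fin n => gaussianReal 0 1).map
    (MeasurableEquiv.toLp 2 (Fin n → ℝ))

/-- The Gaussian measure `N(0, v·Id_n)` on `ℝⁿ` with coordinate variance `v`. -/
noncomputable def gaussianE (n : ℕ) (v : NNReal) : Measure (EuclideanSpace ℝ (Fin n)) :=
  (Measure.pi fun _ : Fin n => gaussianReal 0 v).map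
    (MeasurableEquiv.toLp 2 (Fin n → ℝ))

/-- Gaussian complexity `G(S) = E_{W ∼ N(0,Id_n)} sup_{X ∈ S} ⟨X, W⟩`. -/
noncomputable def gaussComplexity {n : ℕ} (S : Set (EuclideanSpace ℝ (Fin n))) : ℝ :=
  ∫ w, (⨆ X ∈ S, (inner ℝ X w : ℝ)) ∂(stdGaussianE n)

/-!
Write `X = A + W`, `P₀ = Π_S(A)` and `P₁ = Π_S(X)`. Then
`‖Πᵗ(X) - P₀‖² ≤ 2‖P₁ - Πᵗ(X)‖² + 2‖P₁ - P₀‖²`. The first term is at most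
`2c²ᵗ‖P₁ - X‖² ≤ 2c²ᵗ‖X - P₀‖²`, a quadratic in `‖A‖`, `‖W‖` and the radius `n^{C/2}` of `S`.
For the second, firm nonexpansiveness of `Π_S` gives
`‖P₁ - P₀‖² ≤ ⟨W, P₁ - P₀⟩ ≤ sup_{Y ∈ S} ⟨Y, W⟩ - ⟨P₀, W⟩`.
In expectation `⟨P₀, W⟩` vanishes, `E‖W‖² = nσ²` and `E sup_{Y ∈ S} ⟨Y, W⟩ = σ G(S)`, and
`2σ ≤ 16 √(log (2/δ)) Δ / (3ε)`.
-/

open scoped InnerProductSpace NNReal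

section ConvexSet

variable {E : Type*} [NormedAddCommGroup E] [InnerProductSpace ℝ E] {K : Set E} {R : ℝ}

def IsNearestPoint (K : Set E) (x p : E) : Prop :=
  p ∈ K ∧ ∀ y ∈ K, ‖x - p‖ ≤ ‖x - y‖

lemma IsNearestPoint.inner_sub_nonpos (hK : Convex ℝ K) {x p y : E} (h : IsNearestPoint K x p)
    (hy : y ∈ K) : ⟪x - p, y - p⟫_ℝ ≤ 0 := by
  have : Nonempty K := ⟨⟨p, h.1⟩⟩
  refine (norm_eq_iInf_iff_real_inner_le_zero hK h.1).1 ?_ y hy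
  exact le_antisymm (le_ciInf fun z => h.2 z z.2)
    (ciInf_le ⟨0, by rintro _ ⟨z, rfl⟩; exact norm_nonneg _⟩ (⟨p, h.1⟩ : K))

lemma IsNearestPoint.norm_sub_sq_le_inner (hK : Convex ℝ K) {x₁ x₂ p₁ p₂ : E}
    (h₁ : IsNearestPoint K x₁ p₁) (h₂ : IsNearestPoint K x₂ p₂) :
    ‖p₁ - p₂‖ ^ 2 ≤ ⟪x₁ - x₂, p₁ - p₂⟫_ℝ := by
  have h₁₂ := h₁.inner_sub_nonpos hK h₂.1
  have h₂₁ := h₂.inner_sub_nonpos hK h₁.1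
  have : x₁ - x₂ = (p₁ - p₂) + (x₁ - p₁) - (x₂ - p₂) := by abel
  rw [this, inner_sub_left, inner_add_left, real_inner_self_eq_norm_sq]
  have : p₂ - p₁ = -(p₁ - p₂) := by abel
  rw [this, inner_neg_right] at h₁₂
  linarith

/-- Over `ℝ` an empty supremum is `0`, so for `X ∉ K` the inner supremum contributes `0`:
unless `K = univ`, this is `max (sup_{X ∈ K} ⟪X, w⟫) 0` rather than the support function. -/
noncomputable def supportFun (K : Set E) (w : E) : ℝ :=
  ⨆ X ∈ K, ⟪X, w⟫_ℝ

lemma iSup_mem_inner_le_mul_norm (hK : ∀ X ∈ K, ‖X‖ ≤ R) (hR : 0 ≤ R) (X w : E) :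
    (⨆ _ : X ∈ K, ⟪X, w⟫_ℝ) ≤ R * ‖w‖ :=
  Real.iSup_le (fun hX => (real_inner_le_norm X w).trans
    (mul_le_mul_of_nonneg_right (hK X hX) (norm_nonneg w))) (by positivity)

lemma supportFun_le_mul_norm (hK : ∀ X ∈ K, ‖X‖ ≤ R) (hR : 0 ≤ R) (w : E) :
    supportFun K w ≤ R * ‖w‖ :=
  Real.iSup_le (iSup_mem_inner_le_mul_norm hK hR · w) (by positivity)

lemma iSup_mem_inner_le_supportFun (hK : ∀ X ∈ K, ‖X‖ ≤ R) (hR : 0 ≤ R) (X w : E) :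
    (⨆ _ : X ∈ K, ⟪X, w⟫_ℝ) ≤ supportFun K w :=
  le_ciSup ⟨R * ‖w‖, by rintro _ ⟨Y, rfl⟩; exact iSup_mem_inner_le_mul_norm hK hR Y w⟩ X

lemma inner_le_supportFun (hK : ∀ X ∈ K, ‖X‖ ≤ R) {X : E} (hX : X ∈ K) (w : E) :
    ⟪X, w⟫_ℝ ≤ supportFun K w := by
  simpa [ciSup_pos hX] using
    iSup_mem_inner_le_supportFun hK ((norm_nonneg X).trans (hK X hX)) X w

lemma neg_mul_norm_le_supportFun (hK : ∀ X ∈ K, ‖X‖ ≤ R) (hne : K.Nonempty) (w : E) :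
    -(R * ‖w‖) ≤ supportFun K w := by
  obtain ⟨X, hX⟩ := hne
  calc -(R * ‖w‖) ≤ -(‖X‖ * ‖w‖) := by gcongr; exact hK X hX
    _ ≤ ⟪X, w⟫_ℝ := by linarith [abs_real_inner_le_norm X w, neg_abs_le ⟪X, w⟫_ℝ]
    _ ≤ supportFun K w := inner_le_supportFun hK hX w

lemma lipschitzWith_supportFun (hK : ∀ X ∈ K, ‖X‖ ≤ R) (hR : 0 ≤ R) :
    LipschitzWith R.toNNReal (supportFun K) := by
  refine LipschitzWith.of_le_add_mul' R fun w w' => ciSup_le fun X => ?_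
  refine le_trans ?_ (add_le_add_left (iSup_mem_inner_le_supportFun hK hR X w') _)
  rw [dist_eq_norm]
  by_cases hX : X ∈ K
  · simp only [ciSup_pos hX]
    have : ⟪X, w - w'⟫_ℝ ≤ R * ‖w - w'‖ :=
      (real_inner_le_norm X _).trans (by gcongr; exact hK X hX)
    rw [inner_sub_right] at this
    linarith
  · simp only [hX, Real.iSup_of_isEmpty, zero_add]
    positivity

lemma supportFun_smul {a : ℝ} (ha : 0 ≤ a) (w : E) :
    supportFun K (a • w) = a * supportFun K w := by
  simp only [supportFun, Real.mul_iSup_of_nonneg ha, real_inner_smul_right]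

lemma IsNearestPoint.norm_sub_sq_le_supportFun_sub_inner (hK : Convex ℝ K)
    (hKR : ∀ X ∈ K, ‖X‖ ≤ R) {A w p₀ p₁ : E} (h₀ : IsNearestPoint K A p₀)
    (h₁ : IsNearestPoint K (A + w) p₁) :
    ‖p₁ - p₀‖ ^ 2 ≤ supportFun K w - ⟪p₀, w⟫_ℝ := by
  have hfirm := h₁.norm_sub_sq_le_inner hK h₀
  rw [add_sub_cancel_left, inner_sub_right, real_inner_comm p₁, real_inner_comm p₀] at hfirm
  linarith [inner_le_supportFun hKR h₁.1 w]

lemma IsNearestPoint.norm_sub_sq_le_of_norm_sub_le_mul (hK : Convex ℝ K)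
    (hKR : ∀ X ∈ K, ‖X‖ ≤ R) {a : ℝ}
    {A w p₀ p₁ y : E} (h₀ : IsNearestPoint K A p₀) (h₁ : IsNearestPoint K (A + w) p₁)
    (hy : ‖p₁ - y‖ ≤ a * ‖p₁ - (A + w)‖) :
    ‖y - p₀‖ ^ 2 ≤ 2 * a ^ 2 * (2 * R ^ 2 + 4 * ‖A‖ ^ 2) + 8 * a ^ 2 * ‖w‖ ^ 2
      + 2 * supportFun K w - 2 * ⟪p₀, w⟫_ℝ := by
  have hfar : ‖p₁ - (A + w)‖ ≤ ‖A‖ + ‖w‖ + R :=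
    calc ‖p₁ - (A + w)‖ = ‖A + w - p₁‖ := norm_sub_rev _ _
      _ ≤ ‖A + w - p₀‖ := h₁.2 p₀ h₀.1
      _ ≤ ‖A + w‖ + ‖p₀‖ := norm_sub_le _ _
      _ ≤ ‖A‖ + ‖w‖ + R := add_le_add (norm_add_le A w) (hKR p₀ h₀.1)
  have hfar_sq : ‖p₁ - (A + w)‖ ^ 2 ≤ 2 * R ^ 2 + 4 * ‖A‖ ^ 2 + 4 * ‖w‖ ^ 2 := by
    have := (pow_le_pow_left₀ (norm_nonneg _) hfar 2).trans add_sq_le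
    nlinarith [add_sq_le (a := ‖A‖) (b := ‖w‖)]
  have hy_sq : ‖p₁ - y‖ ^ 2 ≤ a ^ 2 * (2 * R ^ 2 + 4 * ‖A‖ ^ 2 + 4 * ‖w‖ ^ 2) := by
    calc ‖p₁ - y‖ ^ 2 ≤ (a * ‖p₁ - (A + w)‖) ^ 2 := pow_le_pow_left₀ (norm_nonneg _) hy 2
      _ ≤ _ := by rw [mul_pow]; gcongr
  have hsplit : ‖y - p₀‖ ^ 2 ≤ 2 * (‖p₁ - y‖ ^ 2 + ‖p₁ - p₀‖ ^ 2) := by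
    calc ‖y - p₀‖ ^ 2 ≤ (‖p₁ - y‖ + ‖p₁ - p₀‖) ^ 2 := by
          gcongr
          rw [← norm_neg (p₁ - y)]
          exact (norm_add_le _ _).trans_eq' (by abel_nf)
      _ ≤ _ := add_sq_le
  linarith [h₀.norm_sub_sq_le_supportFun_sub_inner hK hKR h₁]

end ConvexSet

section Gaussian

variable (n : ℕ) (v : ℝ≥0)

lemma stdGaussianE_eq_stdGaussian : stdGaussianE n = stdGaussian (EuclideanSpace ℝ (Fin n)) :=
  map_pi_eq_stdGaussian

instance isProbabilityMeasure_gaussianE : IsProbabilityMeasure (gaussianE n v) :=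
  Measure.isProbabilityMeasure_map (by fun_prop)

lemma gaussianE_eq_map_smul : gaussianE n v = (stdGaussianE n).map (fun w => √(v : ℝ) • w) := by
  rw [stdGaussianE_eq_stdGaussian]
  refine Measure.ext_of_charFun (funext fun t => ?_)
  rw [charFun_map_smul, gaussianE, charFun_stdGaussian, MeasurableEquiv.coe_toLp, charFun_pi]
  simp_rw [charFun_gaussianReal]
  rw [← Complex.exp_sum, norm_smul, ← Complex.ofReal_pow, mul_pow, Real.norm_eq_abs, sq_abs,
    Real.sq_sqrt v.coe_nonneg, EuclideanSpace.real_norm_sq_eq]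
  push_cast
  simp [Finset.mul_sum, Finset.sum_div, neg_div]

instance isGaussian_gaussianE : IsGaussian (gaussianE n v) := by
  rw [gaussianE_eq_map_smul, stdGaussianE_eq_stdGaussian]
  exact isGaussian_map (√(v : ℝ) • ContinuousLinearMap.id ℝ (EuclideanSpace ℝ (Fin n)))

lemma integral_id_gaussianE : ∫ w, w ∂gaussianE n v = 0 := by
  rw [gaussianE_eq_map_smul, integral_map (f := fun w => w) (by fun_prop) (by fun_prop),
    integral_smul, stdGaussianE_eq_stdGaussian, integral_id_stdGaussian, smul_zero]

lemma integral_inner_gaussianE (y : EuclideanSpace ℝ (Fin n)) :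
    ∫ w, ⟪y, w⟫_ℝ ∂gaussianE n v = 0 := by
  rw [integral_inner (𝕜 := ℝ) IsGaussian.integrable_fun_id, integral_id_gaussianE,
    inner_zero_right]

lemma integrable_norm_sq_gaussianE : Integrable (fun w => ‖w‖ ^ 2) (gaussianE n v) :=
  (IsGaussian.memLp_two_fun_id (μ := gaussianE n v)).integrable_norm_pow'

lemma integral_sq_gaussianReal : ∫ x, x ^ 2 ∂gaussianReal 0 v = v := by
  rw [← variance_of_integral_eq_zero aemeasurable_id' integral_id_gaussianReal,
    variance_fun_id_gaussianReal]

lemma integral_norm_sq_gaussianE : ∫ w, ‖w‖ ^ 2 ∂gaussianE n v = n * v := by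
  have hint (i : Fin n) : Integrable (fun x : Fin n → ℝ => x i ^ 2)
      (Measure.pi fun _ => gaussianReal 0 v) :=
    integrable_comp_eval (μ := fun _ => gaussianReal 0 v) (f := fun x : ℝ => x ^ 2)
      IsGaussian.memLp_two_fun_id.integrable_sq
  simp_rw [gaussianE, integral_map_equiv, MeasurableEquiv.coe_toLp,
    EuclideanSpace.real_norm_sq_eq, integral_finsetSum _ fun i _ => hint i]
  simp [integral_comp_eval (μ := fun _ => gaussianReal 0 v) (f := fun x : ℝ => x ^ 2)
    (by fun_prop), integral_sq_gaussianReal]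

end Gaussian

section GaussianSupportFun

variable {n : ℕ} {S : Set (EuclideanSpace ℝ (Fin n))} {R : ℝ}

lemma integrable_supportFun_gaussianE (hS : ∀ X ∈ S, ‖X‖ ≤ R) (hne : S.Nonempty) (v : ℝ≥0) :
    Integrable (supportFun S) (gaussianE n v) := by
  have hR : 0 ≤ R := (norm_nonneg _).trans (hS _ hne.some_mem)
  refine (IsGaussian.integrable_fun_id.norm.const_mul R).mono'
    (lipschitzWith_supportFun hS hR).continuous.aestronglyMeasurable (ae_of_all _ fun w => ?_)
  exact abs_le.2 ⟨neg_mul_norm_le_supportFun hS hne w, supportFun_le_mul_norm hS hR w⟩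

lemma integral_supportFun_gaussianE (hS : ∀ X ∈ S, ‖X‖ ≤ R) (hR : 0 ≤ R) (v : ℝ≥0) :
    ∫ w, supportFun S w ∂gaussianE n v = √(v : ℝ) * gaussComplexity S := by
  rw [gaussianE_eq_map_smul, integral_map (by fun_prop)
    (lipschitzWith_supportFun hS hR).continuous.aestronglyMeasurable]
  simp_rw [supportFun_smul (Real.sqrt_nonneg _)]
  rw [integral_const_mul]
  rfl

lemma gaussComplexity_nonneg (hS : ∀ X ∈ S, ‖X‖ ≤ R) (hne : S.Nonempty) :
    0 ≤ gaussComplexity S := by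
  obtain ⟨X, hX⟩ := hne
  calc 0 = ∫ w, ⟪X, w⟫_ℝ ∂gaussianE n 1 := (integral_inner_gaussianE n 1 X).symm
    _ ≤ ∫ w, supportFun S w ∂gaussianE n 1 :=
      integral_mono (IsGaussian.integrable_fun_id.const_inner X)
        (integrable_supportFun_gaussianE hS ⟨X, hX⟩ 1) (inner_le_supportFun hS hX)
    _ = gaussComplexity S := by
      rw [integral_supportFun_gaussianE hS ((norm_nonneg X).trans (hS X hX)), NNReal.coe_one,
        Real.sqrt_one, one_mul]

lemma integral_gaussianE_le_of_le_norm_sq_add_supportFun (hS : ∀ X ∈ S, ‖X‖ ≤ R)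
    (hne : S.Nonempty) {v : ℝ≥0} {D b : ℝ} {p : EuclideanSpace ℝ (Fin n)}
    {f : EuclideanSpace ℝ (Fin n) → ℝ} (hf₀ : 0 ≤ f)
    (hf : ∀ w, f w ≤ D + b * ‖w‖ ^ 2 + 2 * supportFun S w - 2 * ⟪p, w⟫_ℝ) :
    ∫ w, f w ∂gaussianE n v ≤ D + b * (n * v) + 2 * (√(v : ℝ) * gaussComplexity S) := by
  have hR : 0 ≤ R := (norm_nonneg _).trans (hS _ hne.some_mem)
  have hsq : Integrable (fun w => b * ‖w‖ ^ 2) (gaussianE n v) :=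
    (integrable_norm_sq_gaussianE n v).const_mul b
  have hDsq : Integrable (fun w => D + b * ‖w‖ ^ 2) (gaussianE n v) :=
    (integrable_const D).add hsq
  have hsupp : Integrable (fun w => 2 * supportFun S w) (gaussianE n v) :=
    (integrable_supportFun_gaussianE hS hne v).const_mul 2
  have hinner : Integrable (fun w => 2 * ⟪p, w⟫_ℝ) (gaussianE n v) :=
    (IsGaussian.integrable_fun_id.const_inner p).const_mul 2
  have hbound : Integrable (fun w => D + b * ‖w‖ ^ 2 + 2 * supportFun S w - 2 * ⟪p, w⟫_ℝ)
      (gaussianE n v) := (hDsq.add hsupp).sub hinner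
  refine (integral_mono_of_nonneg (ae_of_all _ hf₀) hbound (ae_of_all _ hf)).trans_eq ?_
  rw [integral_sub (hDsq.fun_add hsupp) hinner, integral_add hDsq hsupp,
    integral_add (integrable_const D) hsq]
  simp [integral_const_mul, integral_norm_sq_gaussianE, integral_supportFun_gaussianE hS hR,
    integral_inner_gaussianE]

end GaussianSupportFun

theorem perturb_and_alternately_project_utility_general
    (n q : ℕ) (C : ℝ)
    (Sl : Fin q → Set (EuclideanSpace ℝ (Fin n)))
    (hSl : ∀ ℓ, (Sl ℓ).Nonempty ∧ IsCompact (Sl ℓ) ∧ Convex ℝ (Sl ℓ))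
    (S : Set (EuclideanSpace ℝ (Fin n))) (hSdef : S = ⋂ ℓ, Sl ℓ) (hSne : S.Nonempty)
    (hSball : S ⊆ {X | ‖X‖ ^ 2 ≤ (n : ℝ) ^ C})
    (projS : EuclideanSpace ℝ (Fin n) → EuclideanSpace ℝ (Fin n))
    (hprojS : ∀ x, projS x ∈ S ∧ ∀ y ∈ S, ‖x - projS x‖ ≤ ‖x - y‖)
    (iter : ℕ → EuclideanSpace ℝ (Fin n) → EuclideanSpace ℝ (Fin n))
    (c : ℝ)
    (hcontract : ∀ x (s : ℕ), 1 ≤ s → ‖projS x - iter s x‖ ≤ c ^ s * ‖projS x - x‖)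
    (ε δ Δ : ℝ) (hε : ε ∈ Set.Ioc (0 : ℝ) 1) (hδ : δ ∈ Set.Ioc (0 : ℝ) 1) (hΔ : 0 < Δ)
    (σ2 : NNReal) (hσ2 : (σ2 : ℝ) = 2 * Real.log (2 / δ) * Δ ^ 2 / ε ^ 2)
    (t : ℕ) (ht : 1 ≤ t)
    (htLarge : 2 * c ^ (2 * t) * (4 * (σ2 : ℝ) * n + 2 * (n : ℝ) ^ C) ≤ (n : ℝ) ^ (-10 : ℝ))
    (A : EuclideanSpace ℝ (Fin n)) :
    ∫ w, ‖iter t (A + w) - projS A‖ ^ 2 ∂(gaussianE n σ2)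
      ≤ 16 * Real.sqrt (Real.log (2 / δ)) / (3 * ε) * Δ * gaussComplexity S
        + 8 * c ^ (2 * t) * ‖A‖ ^ 2 + (n : ℝ) ^ (-10 : ℝ) := by
  have hSconv : Convex ℝ S := hSdef ▸ convex_iInter fun ℓ => (hSl ℓ).2.2
  have hR : ∀ X ∈ S, ‖X‖ ≤ √((n : ℝ) ^ C) := fun X hX => Real.le_sqrt_of_sq_le (hSball hX)
  have hbound := integral_gaussianE_le_of_le_norm_sq_add_supportFun (v := σ2) hR hSne
    (fun w => by positivity) fun w =>
      IsNearestPoint.norm_sub_sq_le_of_norm_sub_le_mul hSconv hR (hprojS A) (hprojS (A + w))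
        (hcontract (A + w) t ht)
  rw [Real.sq_sqrt (Real.rpow_nonneg n.cast_nonneg C), ← pow_mul, mul_comm t] at hbound
  have hσ : 2 * √(σ2 : ℝ) ≤ 16 * √(Real.log (2 / δ)) / (3 * ε) * Δ := by
    have hL : 0 ≤ Real.log (2 / δ) := Real.log_nonneg (by rw [le_div_iff₀ hδ.1]; linarith [hδ.2])
    have hε₀ := hε.1
    rw [← pow_le_pow_iff_left₀ (by positivity) (by positivity) two_ne_zero, mul_pow, mul_pow,
      div_pow, Real.sq_sqrt σ2.coe_nonneg, mul_pow, Real.sq_sqrt hL, hσ2]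
    field_simp
    nlinarith [mul_nonneg hL (sq_nonneg Δ)]
  have hG := mul_le_mul_of_nonneg_right hσ (gaussComplexity_nonneg hR hSne)
  linarith

/-- Utility of perturb-and-alternately-project, conditional form. -/
theorem perturb_and_alternately_project_utility
    (n q : ℕ) (hq : 1 ≤ q) (C : ℝ) (hC : 0 ≤ C)
    (Sl : Fin q → Set (EuclideanSpace ℝ (Fin n)))
    (hSl : ∀ ℓ, (Sl ℓ).Nonempty ∧ IsCompact (Sl ℓ) ∧ Convex ℝ (Sl ℓ))
    (S : Set (EuclideanSpace ℝ (Fin n))) (hSdef : S = ⋂ ℓ, Sl ℓ) (hSne : S.Nonempty)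
    (hSball : S ⊆ {X | ‖X‖ ^ 2 ≤ (n : ℝ) ^ C})
    (projS : EuclideanSpace ℝ (Fin n) → EuclideanSpace ℝ (Fin n))
    (hprojS : ∀ x, projS x ∈ S ∧ ∀ y ∈ S, ‖x - projS x‖ ≤ ‖x - y‖)
    (projl : Fin q → EuclideanSpace ℝ (Fin n) → EuclideanSpace ℝ (Fin n))
    (hprojl : ∀ ℓ x, projl ℓ x ∈ Sl ℓ ∧ ∀ y ∈ Sl ℓ, ‖x - projl ℓ x‖ ≤ ‖x - y‖)
    (iter : ℕ → EuclideanSpace ℝ (Fin n) → EuclideanSpace ℝ (Fin n))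
    (hiter0 : ∀ x, iter 0 x = x)
    (hiterSucc : ∀ (s : ℕ) x, iter (s + 1) x = (q : ℝ)⁻¹ • ∑ ℓ, projl ℓ (iter s x))
    (c : ℝ) (hc : c ∈ Set.Ioo (0 : ℝ) 1)
    (hcontract : ∀ x (s : ℕ), 1 ≤ s → ‖projS x - iter s x‖ ≤ c ^ s * ‖projS x - x‖)
    (ε δ Δ : ℝ) (hε : ε ∈ Set.Ioc (0 : ℝ) 1) (hδ : δ ∈ Set.Ioc (0 : ℝ) 1) (hΔ : 0 < Δ)
    (σ2 : NNReal) (hσ2 : (σ2 : ℝ) = 2 * Real.log (2 / δ) * Δ ^ 2 / ε ^ 2)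
    (t : ℕ) (ht : 1 ≤ t)
    (htLarge : 2 * c ^ (2 * t) * (4 * (σ2 : ℝ) * n + 2 * (n : ℝ) ^ C) ≤ (n : ℝ) ^ (-10 : ℝ))
    (A : EuclideanSpace ℝ (Fin n)) :
    ∫ w, ‖iter t (A + w) - projS A‖ ^ 2 ∂(gaussianE n σ2)
      ≤ 16 * Real.sqrt (Real.log (2 / δ)) / (3 * ε) * Δ * gaussComplexity S
        + 8 * c ^ (2 * t) * ‖A‖ ^ 2 + (n : ℝ) ^ (-10 : ℝ) :=
  perturb_and_alternately_project_utility_general n q C Sl hSl S hSdef hSne hSball projS hprojS iter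
    c hcontract ε δ Δ hε hδ hΔ σ2 hσ2 t ht htLarge A
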